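/- arXiv:0901.3736 — 2 statements merged into one kernel-verified Lean document; each statement's English description precedes it below -/
import Mathlib

section
/- Let γ > 0, let Φ satisfy the standing potential assumptions for γ, and set m := inf{Φ″(r) : |r| ≤ √(2γ)}. For W ∈ B_γ with P(W) > 0 define the improvement operator T_γ[W] := (√(2γ)/‖∂P(W)‖₂)·∂P(W) (well defined since ∂P(W) ≠ 0). Then T_γ[W] ∈ ∂B_γ (i.e. (1/2)‖T_γ[W]‖₂² = γ), P(T_γ[W]) > 0, and P(T_γ[W]) − P(W) ≥ (m/2)‖Ā(T_γ[W]) − ĀW‖₂²; moreover P(T_γ[W]) = P(W) holds if and only if T_γ[W] = W. -/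
open MeasureTheory Real Filter

/-- Averaging operator `(Ā W)(φ) = ∫_{φ-1/2}^{φ+1/2} W(ψ) dψ`. -/
noncomputable def avg (W : ℝ → ℝ) (φ : ℝ) : ℝ := ∫ ψ in (φ - 1/2)..(φ + 1/2), W ψ

/-- `Φ'`, the derivative of the potential, taken within the relevant interval. -/
noncomputable def Phi' (Φ : ℝ → ℝ) (γ : ℝ) : ℝ → ℝ :=
  fun r => derivWithin Φ (Set.Icc (-Real.sqrt (2*γ)) (Real.sqrt (2*γ))) r

/-- `Φ''`, the second derivative of the potential, taken within the relevant interval. -/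
noncomputable def Phi'' (Φ : ℝ → ℝ) (γ : ℝ) : ℝ → ℝ :=
  fun r => iteratedDerivWithin 2 Φ (Set.Icc (-Real.sqrt (2*γ)) (Real.sqrt (2*γ))) r

/-- Standing assumptions on the potential `Φ` for parameter `γ`:
`Φ` is `C²` on `[-√(2γ), √(2γ)]`, convex there (`Φ'' ≥ 0`), normalised
(`Φ(0) = Φ'(0) = 0`), and does not vanish identically on this interval. -/
def StandingAssumptions (Φ : ℝ → ℝ) (γ : ℝ) : Prop :=
  ContDiffOn ℝ 2 Φ (Set.Icc (-Real.sqrt (2*γ)) (Real.sqrt (2*γ))) ∧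
  (∀ r ∈ Set.Icc (-Real.sqrt (2*γ)) (Real.sqrt (2*γ)), 0 ≤ Phi'' Φ γ r) ∧
  Φ 0 = 0 ∧ Phi' Φ γ 0 = 0 ∧
  ∃ r ∈ Set.Icc (-Real.sqrt (2*γ)) (Real.sqrt (2*γ)), Φ r ≠ 0

/-- `β = Φ''(0)`. -/
noncomputable def betaOf (Φ : ℝ → ℝ) (γ : ℝ) : ℝ := Phi'' Φ γ 0

/-- Potential energy functional `P(W) = ∫_ℝ Φ((ĀW)(φ)) dφ`. -/
noncomputable def PE (Φ : ℝ → ℝ) (W : ℝ → ℝ) : ℝ := ∫ φ : ℝ, Φ (avg W φ)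

/-- Gâteaux derivative `∂P(W) = Ā(Φ' ∘ (ĀW))`. -/
noncomputable def dPE (Φ : ℝ → ℝ) (γ : ℝ) (W : ℝ → ℝ) : ℝ → ℝ :=
  avg (fun ψ => Phi' Φ γ (avg W ψ))

/-- Membership in the ball `B_γ = {W ∈ L²(ℝ) : (1/2)‖W‖₂² ≤ γ}`. -/
def memB (γ : ℝ) (W : ℝ → ℝ) : Prop :=
  MemLp W 2 volume ∧ (∫ φ : ℝ, (W φ)^2) ≤ 2*γ

/-- The improvement operator `T_γ[W] = (√(2γ)/‖∂P(W)‖₂) ∂P(W)`. -/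
noncomputable def Timp (Φ : ℝ → ℝ) (γ : ℝ) (W : ℝ → ℝ) : ℝ → ℝ :=
  fun φ => (Real.sqrt (2*γ) / Real.sqrt (∫ ψ : ℝ, (dPE Φ γ W ψ)^2)) * dPE Φ γ W φ

/-!
Write `D = ∂P(W) = Ā(Φ' ∘ ĀW)` and `T = T_γ[W] = √(2γ) D / ‖D‖₂`. The operator `Ā` is
self-adjoint and contractive on `L²`, and maps `B_γ` into functions with values in
`[-√(2γ), √(2γ)]`, where Taylor's formula with `Φ'' ≥ m` applies pointwise. Integrating it gives,
for `V ∈ B_γ`, `P(V) ≥ P(W) + ⟨D, V - W⟩ + (m/2)‖ĀV - ĀW‖₂²`. Convexity and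
`Φ(0) = Φ'(0) = 0` give `0 < P(W) ≤ ⟨Φ'(ĀW), ĀW⟩ = ⟨D, W⟩`, so `D ≠ 0`; for `V = T` the
first-order term is `√(2γ)‖D‖₂ - ⟨D, W⟩ ≥ 0` by Cauchy–Schwarz. If `P(T) = P(W)`, the
Cauchy–Schwarz inequality is an equality, which forces `‖W‖₂ = √(2γ)` and `W = T`.
-/

open Set Metric ENNReal Function

local notation "𝕀" γ => Set.Icc (-√(2*γ)) (√(2*γ))

lemma ConvexOn.add_mul_sub_le {f : ℝ → ℝ} {s : Set ℝ} {f' x y : ℝ} (hf : ConvexOn ℝ s f)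
    (hx : x ∈ s) (hy : y ∈ s) (hf' : HasDerivWithinAt f f' s x) :
    f x + f' * (y - x) ≤ f y := by
  rcases lt_trichotomy x y with hxy | rfl | hxy
  · have h := hf.le_slope_of_hasDerivWithinAt hx hy hxy hf'
    rw [slope_def_field, le_div_iff₀ (sub_pos.2 hxy)] at h
    linarith
  · simp
  · have h := hf.slope_le_of_hasDerivWithinAt hy hx hxy hf'
    rw [slope_def_field, div_le_iff₀ (sub_pos.2 hxy)] at h
    linarith

lemma add_mul_sub_add_sq_le_of_hasDerivWithinAt {f f' f'' : ℝ → ℝ} {s : Set ℝ} {c x y : ℝ}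
    (hs : Convex ℝ s) (hf : ∀ x ∈ s, HasDerivWithinAt f (f' x) s x)
    (hf' : ∀ x ∈ s, HasDerivWithinAt f' (f'' x) s x) (hc : ∀ x ∈ s, c ≤ f'' x)
    (hx : x ∈ s) (hy : y ∈ s) :
    f x + f' x * (y - x) + c / 2 * (y - x) ^ 2 ≤ f y := by
  -- `f - c/2 · id²` has nonnegative second derivative, hence lies above its tangents
  have hsq (z : ℝ) : HasDerivWithinAt (fun y => c / 2 * y ^ 2) (c * z) s z :=
    (((hasDerivWithinAt_id z s).pow 2).const_mul (c / 2)).congr_deriv (by simp; ring)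
  have hlin (z : ℝ) : HasDerivWithinAt (fun y => c * y) c s z := by
    simpa using (hasDerivWithinAt_id z s).const_mul c
  have hconv : ConvexOn ℝ s fun y => f y - c / 2 * y ^ 2 :=
    convexOn_of_hasDerivWithinAt2_nonneg hs
      (fun z hz => ((hf z hz).sub (hsq z)).continuousWithinAt)
      (fun z hz => ((hf z (interior_subset hz)).sub (hsq z)).mono interior_subset)
      (fun z hz => ((hf' z (interior_subset hz)).sub (hlin z)).mono interior_subset)
      (fun z hz => sub_nonneg.2 (hc z (interior_subset hz)))
  have h := hconv.add_mul_sub_le hx hy ((hf x hx).sub (hsq x))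
  linear_combination h

section L2

variable {α : Type*} [MeasurableSpace α] {μ : Measure α} {f g : α → ℝ}

lemma MeasureTheory.MemLp.inner_toLp_two (hf : MemLp f 2 μ) (hg : MemLp g 2 μ) :
    inner ℝ (hf.toLp f) (hg.toLp g) = ∫ x, f x * g x ∂μ := by
  refine (L2.inner_def _ _).trans (integral_congr_ae ?_)
  filter_upwards [hf.coeFn_toLp, hg.coeFn_toLp] with x hfx hgx
  simp [hfx, hgx, mul_comm]

lemma MeasureTheory.MemLp.norm_toLp_two (hf : MemLp f 2 μ) : ‖hf.toLp f‖ = √(∫ x, f x ^ 2 ∂μ) := by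
  rw [norm_eq_sqrt_real_inner, hf.inner_toLp_two hf]
  simp only [sq]

lemma integral_mul_le_sqrt_mul_sqrt (hf : MemLp f 2 μ) (hg : MemLp g 2 μ) :
    ∫ x, f x * g x ∂μ ≤ √(∫ x, f x ^ 2 ∂μ) * √(∫ x, g x ^ 2 ∂μ) := by
  rw [← hf.inner_toLp_two hg, ← hf.norm_toLp_two, ← hg.norm_toLp_two]
  exact real_inner_le_norm _ _

lemma ae_eq_of_integral_mul_eq_sqrt_mul_sqrt (hf : MemLp f 2 μ) (hg : MemLp g 2 μ)
    (h : ∫ x, f x * g x ∂μ = √(∫ x, f x ^ 2 ∂μ) * √(∫ x, g x ^ 2 ∂μ)) :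
    (fun x => √(∫ x, g x ^ 2 ∂μ) * f x) =ᵐ[μ] fun x => √(∫ x, f x ^ 2 ∂μ) * g x := by
  rw [← hf.inner_toLp_two hg, ← hf.norm_toLp_two, ← hg.norm_toLp_two] at h
  have hpar := inner_eq_norm_mul_iff_real.1 h
  rw [← hf.norm_toLp_two, ← hg.norm_toLp_two]
  filter_upwards [Lp.coeFn_smul ‖hg.toLp g‖ (hf.toLp f), Lp.coeFn_smul ‖hf.toLp f‖ (hg.toLp g),
    hf.coeFn_toLp, hg.coeFn_toLp] with x h1 h2 hfx hgx
  rw [← hfx, ← hgx, ← smul_eq_mul, ← Pi.smul_apply, ← h1, hpar, h2, Pi.smul_apply, smul_eq_mul]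

end L2

def strip (r : ℝ) : Set (ℝ × ℝ) := {p | dist p.2 p.1 < r}

lemma measurableSet_strip (r : ℝ) : MeasurableSet (strip r) :=
  measurableSet_lt (by fun_prop) measurable_const

lemma indicator_strip_apply_left {M : Type*} [Zero M] (r : ℝ) (F : ℝ × ℝ → M) (x y : ℝ) :
    (strip r).indicator F (x, y) =
      (ball x r).indicator (fun y => F (x, y)) y := rfl

lemma indicator_strip_apply_right {M : Type*} [Zero M] (r : ℝ) (F : ℝ × ℝ → M) (x y : ℝ) :
    (strip r).indicator F (x, y) =
      (ball y r).indicator (fun x => F (x, y)) x := by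
  simp only [indicator, strip, mem_ofPred_eq, mem_ball, dist_comm]

lemma lintegral_setLIntegral_ball_comm {F : ℝ → ℝ → ℝ≥0∞}
    (hF : AEMeasurable (uncurry F) (volume.prod volume)) (r : ℝ) :
    ∫⁻ x, ∫⁻ y in ball x r, F x y = ∫⁻ y, ∫⁻ x in ball y r, F x y := by
  simp_rw [← lintegral_indicator measurableSet_ball]
  calc ∫⁻ x, ∫⁻ y, (strip r).indicator (uncurry F) (x, y)
      = ∫⁻ y, ∫⁻ x, (strip r).indicator (uncurry F) (x, y) :=
        lintegral_lintegral_swap (hF.indicator (measurableSet_strip r))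
    _ = _ := by simp_rw [indicator_strip_apply_right]; rfl

lemma integral_setIntegral_ball_comm {F : ℝ → ℝ → ℝ} {r : ℝ}
    (hF : Integrable ((strip r).indicator (uncurry F)) (volume.prod volume)) :
    ∫ x, ∫ y in ball x r, F x y = ∫ y, ∫ x in ball y r, F x y := by
  simp_rw [← integral_indicator measurableSet_ball]
  calc ∫ x, ∫ y, (strip r).indicator (uncurry F) (x, y)
      = ∫ y, ∫ x, (strip r).indicator (uncurry F) (x, y) :=
        integral_integral_swap hF
    _ = _ := by simp_rw [indicator_strip_apply_right]; rfl

lemma avg_eq_setIntegral_ball (U : ℝ → ℝ) (φ : ℝ) :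
    avg U φ = ∫ ψ in ball φ (1/2), U ψ := by
  rw [avg, intervalIntegral.integral_of_le (by linarith), integral_Ioc_eq_integral_Ioo,
    Real.ball_eq_Ioo]

lemma avg_congr_ae {U V : ℝ → ℝ} (h : U =ᵐ[volume] V) : avg U = avg V := by
  funext φ
  simp only [avg_eq_setIntegral_ball]
  exact integral_congr_ae (ae_restrict_of_ae h)

lemma continuous_avg {U : ℝ → ℝ} (hU : LocallyIntegrable U volume) : Continuous (avg U) := by
  have hU' (a b : ℝ) : IntervalIntegrable U volume a b :=
    (hU.integrableOn_isCompact isCompact_uIcc).intervalIntegrable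
  have hprim := intervalIntegral.continuous_primitive hU' 0
  have hsub : avg U = fun φ => (∫ t in (0:ℝ)..(φ + 1/2), U t) - ∫ t in (0:ℝ)..(φ - 1/2), U t := by
    funext φ
    rw [avg, intervalIntegral.integral_interval_sub_left (hU' _ _) (hU' _ _)]
  rw [hsub]
  fun_prop

instance isProbabilityMeasure_restrict_ball_half (φ : ℝ) :
    IsProbabilityMeasure (volume.restrict (ball φ (1/2))) :=
  ⟨by simp [Real.volume_ball]⟩

lemma sq_avg_le_setIntegral_sq {U : ℝ → ℝ} (hU : MemLp U 2 volume) (φ : ℝ) :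
    avg U φ ^ 2 ≤ ∫ ψ in ball φ (1/2), U ψ ^ 2 := by
  rw [avg_eq_setIntegral_ball]
  exact (Even.convexOn_pow even_two).map_integral_le (continuous_pow 2).continuousOn
    isClosed_univ (by simp) ((hU.restrict _).integrable one_le_two)
    (hU.restrict _).integrable_sq

lemma sq_avg_le_integral_sq {U : ℝ → ℝ} (hU : MemLp U 2 volume) (φ : ℝ) :
    avg U φ ^ 2 ≤ ∫ ψ, U ψ ^ 2 :=
  (sq_avg_le_setIntegral_sq hU φ).trans
    (setIntegral_le_integral hU.integrable_sq (.of_forall fun _ => sq_nonneg _))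

lemma lintegral_sq_avg_le {U : ℝ → ℝ} (hU : MemLp U 2 volume) :
    ∫⁻ φ, ENNReal.ofReal (avg U φ ^ 2) ≤ ∫⁻ ψ, ENNReal.ofReal (U ψ ^ 2) := by
  have hmeas : AEMeasurable (fun p : ℝ × ℝ => ENNReal.ofReal (U p.2 ^ 2)) (volume.prod volume) :=
    ((hU.aestronglyMeasurable.aemeasurable.pow_const 2).ennreal_ofReal).comp_snd
  calc ∫⁻ φ, ENNReal.ofReal (avg U φ ^ 2)
      ≤ ∫⁻ φ, ∫⁻ ψ in ball φ (1/2), ENNReal.ofReal (U ψ ^ 2) := by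
        refine lintegral_mono fun φ => ?_
        rw [← ofReal_integral_eq_lintegral_ofReal hU.integrable_sq.integrableOn
          (.of_forall fun _ => sq_nonneg _)]
        exact ofReal_le_ofReal (sq_avg_le_setIntegral_sq hU φ)
    _ = ∫⁻ ψ, ∫⁻ φ in ball ψ (1/2), ENNReal.ofReal (U ψ ^ 2) :=
        lintegral_setLIntegral_ball_comm (F := fun _ ψ => ENNReal.ofReal (U ψ ^ 2)) hmeas _
    _ = ∫⁻ ψ, ENNReal.ofReal (U ψ ^ 2) := by simp [Real.volume_ball]

lemma memLp_avg {U : ℝ → ℝ} (hU : MemLp U 2 volume) : MemLp (avg U) 2 volume := by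
  have hcont := continuous_avg (hU.locallyIntegrable one_le_two)
  refine (memLp_two_iff_integrable_sq hcont.aestronglyMeasurable).2
    ⟨(hcont.pow 2).aestronglyMeasurable, ?_⟩
  rw [hasFiniteIntegral_iff_ofReal (.of_forall fun _ => sq_nonneg _)]
  exact (lintegral_sq_avg_le hU).trans_lt
    ((hasFiniteIntegral_iff_ofReal (.of_forall fun _ => sq_nonneg _)).1
      hU.integrable_sq.hasFiniteIntegral)

lemma integrable_indicator_strip_mul {f g : ℝ → ℝ} (hf : MemLp f 2 volume)
    (hg : MemLp g 2 volume) :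
    Integrable ((strip (1/2)).indicator (fun p => g p.1 * f p.2))
      (volume.prod volume) := by
  have hmeas : AEStronglyMeasurable (fun p : ℝ × ℝ => g p.1 * f p.2) (volume.prod volume) :=
    hg.aestronglyMeasurable.comp_fst.mul hf.aestronglyMeasurable.comp_snd
  refine (integrable_prod_iff (hmeas.indicator (measurableSet_strip _))).2
    ⟨.of_forall fun x => ?_, ?_⟩
  · simp_rw [indicator_strip_apply_left]
    exact (integrable_indicator_iff measurableSet_ball).2
      (((hf.restrict (ball x (1/2))).integrable one_le_two).const_mul (g x))
  · refine (hg.norm.integrable_mul (memLp_avg hf.norm)).congr (.of_forall fun x => ?_)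
    simp [indicator_strip_apply_left, norm_indicator_eq_indicator_norm,
      integral_indicator measurableSet_ball, avg_eq_setIntegral_ball, integral_const_mul]

lemma integral_avg_mul {f g : ℝ → ℝ} (hf : MemLp f 2 volume) (hg : MemLp g 2 volume) :
    ∫ x, avg f x * g x = ∫ x, f x * avg g x := by
  calc ∫ x, avg f x * g x = ∫ x, ∫ y in ball x (1/2), g x * f y := by
        simp_rw [avg_eq_setIntegral_ball, integral_const_mul, mul_comm]
    _ = ∫ y, ∫ x in ball y (1/2), g x * f y :=
        integral_setIntegral_ball_comm (integrable_indicator_strip_mul hf hg)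
    _ = ∫ y, f y * avg g y := by
        simp_rw [avg_eq_setIntegral_ball, integral_mul_const, mul_comm]

lemma avg_sub {U V : ℝ → ℝ} (hU : LocallyIntegrable U volume) (hV : LocallyIntegrable V volume) :
    avg (U - V) = avg U - avg V := by
  funext φ
  exact intervalIntegral.integral_sub (hU.integrableOn_isCompact isCompact_uIcc).intervalIntegrable
    (hV.integrableOn_isCompact isCompact_uIcc).intervalIntegrable

lemma avg_mem_Icc_sqrt {γ : ℝ} {U : ℝ → ℝ} (hU : memB γ U) (φ : ℝ) : avg U φ ∈ 𝕀 γ :=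
  abs_le.1 (Real.abs_le_sqrt ((sq_avg_le_integral_sq hU.1 φ).trans hU.2))

lemma zero_mem_Icc_sqrt (γ : ℝ) : (0 : ℝ) ∈ 𝕀 γ :=
  ⟨neg_nonpos.2 (Real.sqrt_nonneg _), Real.sqrt_nonneg _⟩

lemma uniqueDiffOn_Icc_sqrt {γ : ℝ} (hγ : 0 < γ) : UniqueDiffOn ℝ (𝕀 γ) :=
  uniqueDiffOn_Icc (by simp [Real.sqrt_pos, hγ])

namespace StandingAssumptions

variable {Φ : ℝ → ℝ} {γ : ℝ}

lemma hasDerivWithinAt (hΦ : StandingAssumptions Φ γ) {x : ℝ} (hx : x ∈ 𝕀 γ) :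
    HasDerivWithinAt Φ (Phi' Φ γ x) (𝕀 γ) x :=
  (hΦ.1.differentiableOn (by norm_num) x hx).hasDerivWithinAt

lemma hasDerivWithinAt_Phi' (hγ : 0 < γ) (hΦ : StandingAssumptions Φ γ) {x : ℝ}
    (hx : x ∈ 𝕀 γ) : HasDerivWithinAt (Phi' Φ γ) (Phi'' Φ γ x) (𝕀 γ) x := by
  have hPhi'' : Phi'' Φ γ x = derivWithin (Phi' Φ γ) (𝕀 γ) x := by
    rw [Phi'', iteratedDerivWithin_succ, iteratedDerivWithin_one]
    rfl
  rw [hPhi'']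
  exact ((hΦ.1.derivWithin (uniqueDiffOn_Icc_sqrt hγ) (m := 1) (by norm_num)).differentiableOn
    one_ne_zero x hx).hasDerivWithinAt

lemma add_mul_sub_add_sq_le (hγ : 0 < γ) (hΦ : StandingAssumptions Φ γ) {c x y : ℝ}
    (hc : ∀ r ∈ 𝕀 γ, c ≤ Phi'' Φ γ r) (hx : x ∈ 𝕀 γ) (hy : y ∈ 𝕀 γ) :
    Φ x + Phi' Φ γ x * (y - x) + c / 2 * (y - x) ^ 2 ≤ Φ y :=
  add_mul_sub_add_sq_le_of_hasDerivWithinAt (convex_Icc _ _) (fun _ => hΦ.hasDerivWithinAt)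
    (fun _ => hΦ.hasDerivWithinAt_Phi' hγ) hc hx hy

lemma nonneg (hγ : 0 < γ) (hΦ : StandingAssumptions Φ γ) {x : ℝ} (hx : x ∈ 𝕀 γ) :
    0 ≤ Φ x := by
  have h := hΦ.add_mul_sub_add_sq_le hγ (c := 0) hΦ.2.1 (zero_mem_Icc_sqrt γ) hx
  simpa [hΦ.2.2.1, hΦ.2.2.2.1] using h

lemma le_Phi'_mul (hγ : 0 < γ) (hΦ : StandingAssumptions Φ γ) {x : ℝ} (hx : x ∈ 𝕀 γ) :
    Φ x ≤ Phi' Φ γ x * x := by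
  have h := hΦ.add_mul_sub_add_sq_le hγ (c := 0) hΦ.2.1 hx (zero_mem_Icc_sqrt γ)
  simp only [hΦ.2.2.1, zero_div, zero_mul, add_zero] at h
  linarith

lemma sInf_Phi''_le (hΦ : StandingAssumptions Φ γ) {r : ℝ} (hr : r ∈ 𝕀 γ) :
    sInf (Phi'' Φ γ '' 𝕀 γ) ≤ Phi'' Φ γ r :=
  csInf_le ⟨0, by rintro _ ⟨z, hz, rfl⟩; exact hΦ.2.1 z hz⟩ (mem_image_of_mem _ hr)

lemma sInf_Phi''_nonneg (hΦ : StandingAssumptions Φ γ) : 0 ≤ sInf (Phi'' Φ γ '' 𝕀 γ) :=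
  Real.sInf_nonneg (by rintro _ ⟨z, hz, rfl⟩; exact hΦ.2.1 z hz)

lemma exists_abs_Phi'_le (hγ : 0 < γ) (hΦ : StandingAssumptions Φ γ) :
    ∃ C, ∀ x ∈ 𝕀 γ, |Phi' Φ γ x| ≤ C * |x| := by
  obtain ⟨C, hC⟩ := isCompact_Icc.exists_bound_of_continuousOn
    (hΦ.1.continuousOn_iteratedDerivWithin (m := 2) le_rfl (uniqueDiffOn_Icc_sqrt hγ))
  refine ⟨C, fun x hx => ?_⟩
  have h := (convex_Icc _ _).norm_image_sub_le_of_norm_hasDerivWithin_le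
    (fun _ => hΦ.hasDerivWithinAt_Phi' hγ) hC (zero_mem_Icc_sqrt γ) hx
  simpa [hΦ.2.2.2.1] using h

lemma exists_abs_le_mul_sq (hγ : 0 < γ) (hΦ : StandingAssumptions Φ γ) :
    ∃ C, ∀ x ∈ 𝕀 γ, |Φ x| ≤ C * x ^ 2 := by
  obtain ⟨C, hC⟩ := hΦ.exists_abs_Phi'_le hγ
  refine ⟨C, fun x hx => ?_⟩
  calc |Φ x| = Φ x := abs_of_nonneg (hΦ.nonneg hγ hx)
    _ ≤ |Phi' Φ γ x| * |x| := (hΦ.le_Phi'_mul hγ hx).trans ((le_abs_self _).trans (abs_mul _ _).le)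
    _ ≤ C * |x| * |x| := by gcongr; exact hC x hx
    _ = C * x ^ 2 := by rw [mul_assoc, ← sq, sq_abs]

end StandingAssumptions

section Functional

variable {γ : ℝ} {Φ : ℝ → ℝ} {U V W : ℝ → ℝ}

lemma integrable_comp_avg (hγ : 0 < γ) (hΦ : StandingAssumptions Φ γ) (hU : memB γ U) :
    Integrable (fun φ => Φ (avg U φ)) volume := by
  obtain ⟨C, hC⟩ := hΦ.exists_abs_le_mul_sq hγ
  refine (((memLp_avg hU.1).integrable_sq).const_mul C).mono' ?_
    (.of_forall fun φ => hC _ (avg_mem_Icc_sqrt hU φ))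
  exact (hΦ.1.continuousOn.comp_continuous (continuous_avg (hU.1.locallyIntegrable one_le_two))
    (avg_mem_Icc_sqrt hU)).aestronglyMeasurable

lemma memLp_Phi'_comp_avg (hγ : 0 < γ) (hΦ : StandingAssumptions Φ γ) (hU : memB γ U) :
    MemLp (fun φ => Phi' Φ γ (avg U φ)) 2 volume := by
  obtain ⟨C, hC⟩ := hΦ.exists_abs_Phi'_le hγ
  refine ((memLp_avg hU.1).const_mul C).of_le ?_ (.of_forall fun φ => ?_)
  · exact ((hΦ.1.continuousOn_derivWithin (uniqueDiffOn_Icc_sqrt hγ) one_le_two).comp_continuous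
      (continuous_avg (hU.1.locallyIntegrable one_le_two))
      (avg_mem_Icc_sqrt hU)).aestronglyMeasurable
  · simpa [abs_mul] using (hC _ (avg_mem_Icc_sqrt hU φ)).trans
      (mul_le_mul_of_nonneg_right (le_abs_self C) (abs_nonneg _))

lemma memLp_dPE (hγ : 0 < γ) (hΦ : StandingAssumptions Φ γ) (hU : memB γ U) :
    MemLp (dPE Φ γ U) 2 volume :=
  memLp_avg (memLp_Phi'_comp_avg hγ hΦ hU)

lemma PE_le_integral_dPE_mul (hγ : 0 < γ) (hΦ : StandingAssumptions Φ γ) (hW : memB γ W) :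
    PE Φ W ≤ ∫ φ, dPE Φ γ W φ * W φ := by
  have hg := memLp_Phi'_comp_avg hγ hΦ hW
  calc PE Φ W ≤ ∫ φ, Phi' Φ γ (avg W φ) * avg W φ :=
        integral_mono (integrable_comp_avg hγ hΦ hW) (hg.integrable_mul (memLp_avg hW.1))
          fun φ => hΦ.le_Phi'_mul hγ (avg_mem_Icc_sqrt hW φ)
    _ = ∫ φ, dPE Φ γ W φ * W φ := (integral_avg_mul hg hW.1).symm

lemma PE_add_integral_dPE_mul_sub_add_le (hγ : 0 < γ) (hΦ : StandingAssumptions Φ γ) {c : ℝ}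
    (hc : ∀ r ∈ 𝕀 γ, c ≤ Phi'' Φ γ r) (hW : memB γ W) (hV : memB γ V) :
    PE Φ W + (∫ φ, dPE Φ γ W φ * (V φ - W φ)) + c / 2 * ∫ φ, (avg V φ - avg W φ) ^ 2
      ≤ PE Φ V := by
  have hg := memLp_Phi'_comp_avg hγ hΦ hW
  have hdiff : MemLp (fun φ => avg V φ - avg W φ) 2 volume := (memLp_avg hV.1).sub (memLp_avg hW.1)
  have hadj : ∫ φ, dPE Φ γ W φ * (V φ - W φ)
      = ∫ φ, Phi' Φ γ (avg W φ) * (avg V φ - avg W φ) := by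
    have h := integral_avg_mul hg (hV.1.sub hW.1)
    rw [avg_sub (hV.1.locallyIntegrable one_le_two) (hW.1.locallyIntegrable one_le_two)] at h
    exact h
  have hmul : Integrable (fun φ => Phi' Φ γ (avg W φ) * (avg V φ - avg W φ)) volume :=
    hg.integrable_mul hdiff
  have hlin : Integrable (fun φ => Φ (avg W φ) + Phi' Φ γ (avg W φ) * (avg V φ - avg W φ))
      volume :=
    (integrable_comp_avg hγ hΦ hW).add hmul
  have hquad : Integrable (fun φ => c / 2 * (avg V φ - avg W φ) ^ 2) volume :=
    hdiff.integrable_sq.const_mul _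
  calc PE Φ W + (∫ φ, dPE Φ γ W φ * (V φ - W φ)) + c / 2 * ∫ φ, (avg V φ - avg W φ) ^ 2
      = ∫ φ, (Φ (avg W φ) + Phi' Φ γ (avg W φ) * (avg V φ - avg W φ)
          + c / 2 * (avg V φ - avg W φ) ^ 2) := by
        rw [hadj, integral_add hlin hquad, integral_add (integrable_comp_avg hγ hΦ hW) hmul,
          integral_const_mul, PE]
    _ ≤ PE Φ V := integral_mono (hlin.add hquad) (integrable_comp_avg hγ hΦ hV) fun φ =>
        hΦ.add_mul_sub_add_sq_le hγ hc (avg_mem_Icc_sqrt hW φ) (avg_mem_Icc_sqrt hV φ)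

end Functional

section Improvement

variable {γ : ℝ} {Φ W : ℝ → ℝ}

lemma integral_sq_Timp (hγ : 0 ≤ γ) (hD : 0 < ∫ ψ, dPE Φ γ W ψ ^ 2) :
    ∫ φ, Timp Φ γ W φ ^ 2 = 2 * γ := by
  simp only [Timp, mul_pow, integral_const_mul, div_pow, Real.sq_sqrt hD.le,
    Real.sq_sqrt (by positivity : (0 : ℝ) ≤ 2 * γ)]
  field_simp

lemma integral_dPE_mul_Timp_sub (hD : MemLp (dPE Φ γ W) 2 volume) (hW : MemLp W 2 volume) :
    ∫ φ, dPE Φ γ W φ * (Timp Φ γ W φ - W φ)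
      = √(2 * γ) * √(∫ ψ, dPE Φ γ W ψ ^ 2) - ∫ φ, dPE Φ γ W φ * W φ := by
  have hDT : Integrable (fun φ => dPE Φ γ W φ * Timp Φ γ W φ) volume :=
    hD.integrable_mul (hD.const_mul _)
  have hDW : Integrable (fun φ => dPE Φ γ W φ * W φ) volume := hD.integrable_mul hW
  simp_rw [mul_sub]
  rw [integral_sub hDT hDW]
  congr 1
  simp_rw [Timp, mul_left_comm _ (√(2 * γ) / _), ← sq, integral_const_mul, div_mul_eq_mul_div,
    mul_div_assoc, Real.div_sqrt]

lemma Timp_ae_eq_of_integral_dPE_mul_eq (hW : memB γ W) (hD : MemLp (dPE Φ γ W) 2 volume)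
    (hnD : 0 < ∫ ψ, dPE Φ γ W ψ ^ 2)
    (h : ∫ φ, dPE Φ γ W φ * W φ = √(2 * γ) * √(∫ ψ, dPE Φ γ W ψ ^ 2)) :
    Timp Φ γ W =ᵐ[volume] W := by
  have hsqrt : 0 < √(∫ ψ, dPE Φ γ W ψ ^ 2) := Real.sqrt_pos.2 hnD
  have hCS := integral_mul_le_sqrt_mul_sqrt hD hW.1
  have hWs : √(∫ φ, W φ ^ 2) = √(2 * γ) := by
    refine le_antisymm (Real.sqrt_le_sqrt hW.2) (le_of_mul_le_mul_left ?_ hsqrt)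
    linarith
  have hpar := ae_eq_of_integral_mul_eq_sqrt_mul_sqrt hD hW.1 (by rw [h, hWs, mul_comm])
  filter_upwards [hpar] with x hx
  rw [hWs] at hx
  rw [Timp, div_mul_eq_mul_div, hx, mul_div_cancel_left₀ _ hsqrt.ne']

end Improvement

/-- properties of the improvement operator `T_γ` on `B_γ ∖ M`. -/
theorem statement9 (γ : ℝ) (hγ : 0 < γ) (Φ : ℝ → ℝ) (hΦ : StandingAssumptions Φ γ)
    (m : ℝ)
    (hm : m = sInf (Phi'' Φ γ '' Set.Icc (-Real.sqrt (2*γ)) (Real.sqrt (2*γ))))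
    (W : ℝ → ℝ) (hW : memB γ W) (hpos : 0 < PE Φ W) :
    (1/2) * (∫ φ : ℝ, (Timp Φ γ W φ)^2) = γ ∧
    0 < PE Φ (Timp Φ γ W) ∧
    PE Φ (Timp Φ γ W) - PE Φ W ≥
      m/2 * (∫ φ : ℝ, (avg (Timp Φ γ W) φ - avg W φ)^2) ∧
    (PE Φ (Timp Φ γ W) = PE Φ W ↔ Timp Φ γ W =ᵐ[volume] W) := by
  subst hm
  have hD := memLp_dPE hγ hΦ hW
  have hCS : ∫ φ, dPE Φ γ W φ * W φ ≤ √(∫ ψ, dPE Φ γ W ψ ^ 2) * √(2 * γ) :=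
    (integral_mul_le_sqrt_mul_sqrt hD hW.1).trans
      (mul_le_mul_of_nonneg_left (Real.sqrt_le_sqrt hW.2) (Real.sqrt_nonneg _))
  have hnD : 0 < ∫ ψ, dPE Φ γ W ψ ^ 2 := Real.sqrt_pos.1 <| pos_of_mul_pos_left
    ((hpos.trans_le (PE_le_integral_dPE_mul hγ hΦ hW)).trans_le hCS) (Real.sqrt_nonneg _)
  have hT2 := integral_sq_Timp hγ.le hnD
  have hgap := PE_add_integral_dPE_mul_sub_add_le (V := Timp Φ γ W) hγ hΦ
    (fun _ => hΦ.sInf_Phi''_le) hW ⟨hD.const_mul _, hT2.le⟩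
  rw [integral_dPE_mul_Timp_sub hD hW.1] at hgap
  have hquad : 0 ≤ sInf (Phi'' Φ γ '' 𝕀 γ) / 2 * ∫ φ, (avg (Timp Φ γ W) φ - avg W φ) ^ 2 :=
    mul_nonneg (div_nonneg hΦ.sInf_Phi''_nonneg zero_le_two) (integral_nonneg fun _ => sq_nonneg _)
  refine ⟨by rw [hT2]; ring, by linarith, by linarith, fun h => ?_, fun h => ?_⟩
  · exact Timp_ae_eq_of_integral_dPE_mul_eq hW hD hnD (by linarith)
  · simp only [PE, avg_congr_ae h]
end

section
/- Let W_CL denote the indicator function of [−1/2, 1/2]. If W ∈ L²(ℝ) is even, unimodal, almost everywhere nonnegative, satisfies ‖W‖₂² ≤ 1, and W ≠ W_CL as an element of L²(ℝ), then ‖ĀW‖_∞ < 1, whereas ‖ĀW_CL‖_∞ = (ĀW_CL)(0) = 1. -/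
open MeasureTheory Real Filter

/-- `W` is (a.e.) even and unimodal. -/
def EvenUnimodal (W : ℝ → ℝ) : Prop :=
  (∀ᵐ φ ∂(volume : Measure ℝ), W (-φ) = W φ) ∧
  (∀ᵐ p ∂(volume : Measure (ℝ × ℝ)), 0 ≤ p.1 → p.1 ≤ p.2 → W p.2 ≤ W p.1)

/-- The completely localised profile: indicator function of `[−1/2, 1/2]`. -/
noncomputable def WCL : ℝ → ℝ := Set.indicator (Set.Icc (-(1/2) : ℝ) (1/2)) (fun _ => 1)

/-!
Evenness and unimodality give `W (u + 1) ≤ W u` for a.e. `u > -1/2`, so moving the window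
`[φ - 1/2, φ + 1/2]` away from the origin can only lose mass: `ĀW` is continuous, even and
maximal at `0`, hence `‖ĀW‖_∞ = (ĀW)(0) = ⟨W, W_CL⟩`. Expanding
`0 < ‖W - W_CL‖₂² ≤ 2 - 2 ⟨W, W_CL⟩` then gives `(ĀW)(0) < 1`.
-/

open scoped ENNReal

lemma MeasureTheory.LocallyIntegrable.intervalIntegrable {E : Type*} [NormedAddCommGroup E]
    {μ : Measure ℝ} {f : ℝ → E} (hf : LocallyIntegrable f μ) (a b : ℝ) :
    IntervalIntegrable f μ a b :=
  intervalIntegrable_iff.2 <|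
    (hf.integrableOn_isCompact isCompact_uIcc).mono_set Set.uIoc_subset_uIcc

lemma Continuous.eLpNorm_top_eq_enorm {X E : Type*} [TopologicalSpace X] [MeasurableSpace X]
    [OpensMeasurableSpace X] {μ : Measure X} [μ.IsOpenPosMeasure] [NormedAddCommGroup E]
    {f : X → E} (hf : Continuous f) {x₀ : X} (hmax : ∀ x, ‖f x‖ ≤ ‖f x₀‖) :
    eLpNorm f ⊤ μ = ‖f x₀‖ₑ := by
  rw [eLpNorm_exponent_top]
  refine le_antisymm (eLpNormEssSup_le_of_ae_enorm_bound (ae_of_all _ fun x => ?_)) ?_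
  · exact enorm_le_iff_norm_le.2 (hmax x)
  · have hclosed : IsClosed {x | ‖f x‖ₑ ≤ eLpNormEssSup f μ} :=
      isClosed_le hf.enorm continuous_const
    have hdense := μ.dense_of_ae (ae_le_eLpNormEssSup (f := f))
    exact hclosed.closure_subset (hdense.closure_eq ▸ Set.mem_univ x₀)

lemma integral_sub_sq {α : Type*} [MeasurableSpace α] {μ : Measure α} {f g : α → ℝ}
    (hf : MemLp f 2 μ) (hg : MemLp g 2 μ) :
    ∫ x, (f x - g x) ^ 2 ∂μ = ∫ x, f x ^ 2 ∂μ - 2 * ∫ x, f x * g x ∂μ + ∫ x, g x ^ 2 ∂μ := by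
  have hfg : Integrable (fun x => 2 * (f x * g x)) μ := (hf.integrable_mul hg).const_mul 2
  have hsub : Integrable (fun x => f x ^ 2 - 2 * (f x * g x)) μ := hf.integrable_sq.sub hfg
  rw [← integral_const_mul, ← integral_sub hf.integrable_sq hfg,
    ← integral_add hsub hg.integrable_sq]
  exact integral_congr_ae (ae_of_all _ fun x => by ring)

lemma integral_sq_pos {α : Type*} [MeasurableSpace α] {μ : Measure α} {f : α → ℝ}
    (hf : MemLp f 2 μ) (hne : ¬ f =ᵐ[μ] 0) : 0 < ∫ x, f x ^ 2 ∂μ := by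
  refine (integral_nonneg fun x => sq_nonneg (f x)).lt_of_ne fun h => hne ?_
  filter_upwards [(integral_eq_zero_iff_of_nonneg (fun x => sq_nonneg (f x))
    hf.integrable_sq).1 h.symm] with x hx
  exact pow_eq_zero_iff two_ne_zero |>.1 hx

/- The hypothesis says nothing about any single null line such as `{(u, u + 1)}`. Instead,
`h x` is the essential supremum of `f` on `(x, ∞)`: a.e. `h x ≤ f x` on `s`, and a.e.
`f y ≤ h q` for every rational `q < y`. -/
lemma exists_ae_mem_antitoneOn {μ : Measure ℝ} [SFinite μ] {f : ℝ → ℝ} {s : Set ℝ}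
    (hf : ∀ᵐ p ∂μ.prod μ, p.1 ∈ s → p.1 ≤ p.2 → f p.2 ≤ f p.1) :
    ∃ S : Set ℝ, (∀ᵐ x ∂μ, x ∈ S) ∧ AntitoneOn f (S ∩ s) := by
  set h : ℝ → EReal := fun x => essSup (fun y => (f y : EReal)) (μ.restrict (Set.Ioi x))
  have h_anti : Antitone h := fun a b hab =>
    essSup_mono_measure (Measure.absolutelyContinuous_of_le
      (Measure.restrict_mono (Set.Ioi_subset_Ioi hab) le_rfl))
  have h_upper : ∀ᵐ y ∂μ, ∀ q : ℚ, (q : ℝ) < y → (f y : EReal) ≤ h q :=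
    ae_all_iff.2 fun q => (ae_restrict_iff' measurableSet_Ioi).1 ae_le_essSup
  have h_lower : ∀ᵐ x ∂μ, x ∈ s → h x ≤ f x := by
    filter_upwards [Measure.ae_ae_of_ae_prod hf] with x hx hxs
    refine essSup_le_of_ae_le _ ((ae_restrict_iff' measurableSet_Ioi).2 ?_)
    filter_upwards [hx] with y hy hxy
    exact EReal.coe_le_coe_iff.2 (hy hxs hxy.le)
  refine ⟨{x | (x ∈ s → h x ≤ f x) ∧ ∀ q : ℚ, (q : ℝ) < x → (f x : EReal) ≤ h q},
    h_lower.and h_upper, ?_⟩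
  rintro x ⟨hx, hxs⟩ y ⟨hy, -⟩ hxy
  rcases hxy.eq_or_lt with rfl | hxy
  · exact le_rfl
  obtain ⟨q, hxq, hqy⟩ := exists_rat_btwn hxy
  exact EReal.coe_le_coe_iff.1 <| calc
    (f y : EReal) ≤ h q := hy.2 q hqy
    _ ≤ h x := h_anti hxq.le
    _ ≤ f x := hx.1 hxs

lemma EvenUnimodal.ae_apply_add_le {W : ℝ → ℝ} (hU : EvenUnimodal W) {c : ℝ} (hc : 0 ≤ c) :
    ∀ᵐ u, -c ≤ 2 * u → W (u + c) ≤ W u := by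
  have hmono := hU.2
  rw [Measure.volume_eq_prod] at hmono
  obtain ⟨S, hS, hanti⟩ := exists_ae_mem_antitoneOn (s := Set.Ici 0) hmono
  filter_upwards [hS, (measurePreserving_add_right volume c).quasiMeasurePreserving.ae hS,
    (Measure.measurePreserving_neg volume).quasiMeasurePreserving.ae hS, hU.1]
    with u hu hu_add hu_neg heven hcu
  rcases le_total 0 u with h0 | h0
  · exact hanti ⟨hu, h0⟩ ⟨hu_add, Set.mem_Ici.2 (by linarith)⟩ (by linarith)
  · rw [← heven]
    exact hanti ⟨hu_neg, neg_nonneg.2 h0⟩ ⟨hu_add, Set.mem_Ici.2 (by linarith)⟩ (by linarith)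

section Averaging

variable {W : ℝ → ℝ}

lemma continuous_avg_s13 (hW : LocallyIntegrable W) : Continuous (avg W) := by
  have hF := intervalIntegral.continuous_primitive hW.intervalIntegrable 0
  have hdiff : avg W =
      fun φ => (∫ ψ in (0 : ℝ)..(φ + 1/2), W ψ) - ∫ ψ in (0 : ℝ)..(φ - 1/2), W ψ := by
    funext φ
    rw [avg, intervalIntegral.integral_interval_sub_left (hW.intervalIntegrable _ _)
      (hW.intervalIntegrable _ _)]
  rw [hdiff]
  fun_prop

lemma avg_nonneg (hpos : 0 ≤ᵐ[volume] W) (φ : ℝ) : 0 ≤ avg W φ :=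
  intervalIntegral.integral_nonneg_of_ae (by linarith) hpos

lemma avg_neg (heven : ∀ᵐ φ, W (-φ) = W φ) (φ : ℝ) : avg W (-φ) = avg W φ := by
  rw [avg, avg, show -φ - 1/2 = -(φ + 1/2) by ring, show -φ + 1/2 = -(φ - 1/2) by ring,
    ← intervalIntegral.integral_comp_neg]
  exact intervalIntegral.integral_congr_ae (heven.mono fun x hx _ => hx)

lemma avg_sub_avg (hW : LocallyIntegrable W) (a b : ℝ) :
    avg W b - avg W a = ∫ u in (a - 1/2)..(b - 1/2), (W (u + 1) - W u) := by
  have hshift :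
      (∫ u in (a - 1/2)..(b - 1/2), W (u + 1)) = ∫ u in (a + 1/2)..(b + 1/2), W u := by
    rw [intervalIntegral.integral_comp_add_right]; ring_nf
  rw [intervalIntegral.integral_sub ?_ (hW.intervalIntegrable _ _), hshift, avg, avg,
    intervalIntegral.integral_interval_sub_interval_comm' (hW.intervalIntegrable _ _)
      (hW.intervalIntegrable _ _) (hW.intervalIntegrable _ _)]
  convert (hW.intervalIntegrable (a + 1/2) (b + 1/2)).comp_add_right 1 using 1 <;> ring

lemma antitoneOn_avg (hW : LocallyIntegrable W)
    (hshift : ∀ᵐ u, -(1/2) < u → W (u + 1) ≤ W u) : AntitoneOn (avg W) (Set.Ici 0) := by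
  intro a ha b _ hab
  rw [← sub_nonpos, avg_sub_avg hW, intervalIntegral.integral_of_le (by linarith)]
  refine setIntegral_nonpos_ae measurableSet_Ioc (hshift.mono fun u hu hmem => ?_)
  have : -(1/2) < u := by linarith [hmem.1, Set.mem_Ici.1 ha]
  linarith [hu this]

lemma avg_le_avg_zero (hW : LocallyIntegrable W) (heven : ∀ᵐ φ, W (-φ) = W φ)
    (hshift : ∀ᵐ u, -(1/2) < u → W (u + 1) ≤ W u) (φ : ℝ) : avg W φ ≤ avg W 0 := by
  rcases le_total 0 φ with hφ | hφ
  · exact antitoneOn_avg hW hshift Set.self_mem_Ici hφ hφ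
  · rw [← avg_neg heven]
    exact antitoneOn_avg hW hshift Set.self_mem_Ici (neg_nonneg.2 hφ) (neg_nonneg.2 hφ)

lemma eLpNorm_top_avg_eq (hW : LocallyIntegrable W) (hpos : 0 ≤ᵐ[volume] W)
    (heven : ∀ᵐ φ, W (-φ) = W φ) (hshift : ∀ᵐ u, -(1/2) < u → W (u + 1) ≤ W u) :
    eLpNorm (avg W) ⊤ volume = ENNReal.ofReal (avg W 0) := by
  rw [(continuous_avg_s13 hW).eLpNorm_top_eq_enorm (x₀ := 0),
    Real.enorm_of_nonneg (avg_nonneg hpos 0)]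
  intro φ
  rw [Real.norm_of_nonneg (avg_nonneg hpos φ), Real.norm_of_nonneg (avg_nonneg hpos 0)]
  exact avg_le_avg_zero hW heven hshift φ

lemma integral_indicator_eq_avg_zero (W : ℝ → ℝ) :
    ∫ φ, (Set.Icc (-(1/2) : ℝ) (1/2)).indicator W φ = avg W 0 := by
  rw [integral_indicator measurableSet_Icc, integral_Icc_eq_integral_Ioc, avg,
    intervalIntegral.integral_of_le (by norm_num)]
  norm_num

end Averaging

lemma integral_mul_WCL (W : ℝ → ℝ) : ∫ φ, W φ * WCL φ = avg W 0 := by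
  simp_rw [WCL, ← Set.indicator_mul_right, mul_one]
  exact integral_indicator_eq_avg_zero W

lemma avg_WCL_zero : avg WCL 0 = 1 := by
  rw [← integral_indicator_eq_avg_zero WCL, WCL, Set.indicator_indicator, Set.inter_self]
  norm_num [integral_indicator_one measurableSet_Icc]

lemma memLp_WCL (p : ℝ≥0∞) : MemLp WCL p volume :=
  memLp_indicator_const p measurableSet_Icc 1 (Or.inr measure_Icc_lt_top.ne)

lemma locallyIntegrable_WCL : LocallyIntegrable WCL :=
  (memLp_one_iff_integrable.1 (memLp_WCL 1)).locallyIntegrable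

lemma WCL_nonneg (φ : ℝ) : 0 ≤ WCL φ :=
  Set.indicator_nonneg (fun _ _ => zero_le_one) φ

lemma WCL_neg (φ : ℝ) : WCL (-φ) = WCL φ := by
  simp only [WCL, Set.indicator_apply, Set.mem_Icc, neg_le, neg_neg, and_comm]

lemma WCL_add_one_le {u : ℝ} (hu : -(1/2) < u) : WCL (u + 1) ≤ WCL u := by
  rw [WCL, Set.indicator_of_notMem fun h => by linarith [(Set.mem_Icc.1 h).2]]
  exact WCL_nonneg u

lemma avg_zero_lt_one {W : ℝ → ℝ} (hW : MemLp W 2 volume) (hball : ∫ φ, W φ ^ 2 ≤ 1)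
    (hne : ¬ W =ᵐ[volume] WCL) : avg W 0 < 1 := by
  have hdist : 0 < ∫ φ, (W φ - WCL φ) ^ 2 :=
    integral_sq_pos (hW.sub (memLp_WCL 2)) (mt (sub_ae_eq_zero _ _).1 hne)
  have hWCL : ∫ φ, WCL φ ^ 2 = 1 := by
    simp_rw [sq, integral_mul_WCL WCL, avg_WCL_zero]
  rw [integral_sub_sq hW (memLp_WCL 2), integral_mul_WCL W, hWCL] at hdist
  linarith

/-- any even, unimodal, nonnegative `W` with `‖W‖₂² ≤ 1` and
`W ≠ W_CL` in `L²` satisfies `‖ĀW‖_∞ < 1 = (ĀW_CL)(0) = ‖ĀW_CL‖_∞`. -/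
theorem statement13 (W : ℝ → ℝ) (hW : MemLp W 2 volume)
    (hball : (∫ φ : ℝ, (W φ)^2) ≤ 1)
    (hU : EvenUnimodal W) (hpos : ∀ᵐ φ ∂(volume : Measure ℝ), 0 ≤ W φ)
    (hne : ¬ (W =ᵐ[volume] WCL)) :
    eLpNorm (avg W) ⊤ volume < 1 ∧
    avg WCL 0 = 1 ∧
    eLpNorm (avg WCL) ⊤ volume = 1 := by
  have hshift : ∀ᵐ u, -(1/2) < u → W (u + 1) ≤ W u :=
    (hU.ae_apply_add_le zero_le_one).mono fun u hu h => hu (by linarith)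
  refine ⟨?_, avg_WCL_zero, ?_⟩
  · rw [eLpNorm_top_avg_eq (hW.locallyIntegrable one_le_two) hpos hU.1 hshift]
    exact ENNReal.ofReal_lt_one.2 (avg_zero_lt_one hW hball hne)
  · rw [eLpNorm_top_avg_eq locallyIntegrable_WCL (ae_of_all _ WCL_nonneg) (ae_of_all _ WCL_neg)
      (ae_of_all _ fun _ => WCL_add_one_le), avg_WCL_zero, ENNReal.ofReal_one]
end
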